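/- arXiv:2203.04290 — 4 statements merged into one kernel-verified Lean document; each statement's English description precedes it below -/
import Mathlib

section
/- With the same recursive composition v_k(x) = v_{k-1}(x) + u_k(x + v_{k-1}(x)) and bounds ‖u_k‖_∞ ≤ a_k, for every pair of points x, y and every index 1 ≤ k'' ≤ K one has ‖v_K(x) − v_K(y)‖_∞ ≤ ‖v_{k''-1}(x) − v_{k''-1}(y)‖_∞ + 2 Σ_{k=k''}^{K} a_k. In particular ‖v_K(x) − v_K(y)‖_∞ ≤ 2 Σ_{k=1}^{K} a_k for all x, y. -/
/-! Each level moves every point by at most `a k`, wherever `u k` is evaluated, so between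
levels `k'' - 1` and `K` both `v · x` and `v · y` drift by at most `∑ a k`; the triangle
inequality through `v (k'' - 1) x` and `v (k'' - 1) y` gives the bound. -/

open Finset

theorem dist_le_sum_Icc_of_dist_succ_le {X : Type*} [PseudoMetricSpace X] (f : ℕ → X)
    (a : ℕ → ℝ) {m n : ℕ} (hmn : m ≤ n)
    (hstep : ∀ k, m ≤ k → k < n → dist (f k) (f (k + 1)) ≤ a (k + 1)) :
    dist (f m) (f n) ≤ ∑ k ∈ Icc (m + 1) n, a k := by
  calc dist (f m) (f n) ≤ ∑ k ∈ Ico m n, dist (f k) (f (k + 1)) := dist_le_Ico_sum_dist f hmn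
    _ ≤ ∑ k ∈ Ico m n, a (k + 1) :=
        sum_le_sum fun k hk => hstep k (mem_Ico.1 hk).1 (mem_Ico.1 hk).2
    _ = ∑ k ∈ Icc (m + 1) n, a k := by
        rw [← Ico_add_one_right_eq_Icc, sum_Ico_add']

theorem norm_sub_le_norm_sub_add_two_mul_sum {α E : Type*} [SeminormedAddCommGroup E]
    (v : ℕ → α → E) (a : ℕ → ℝ) {m n : ℕ} (hmn : m ≤ n)
    (hstep : ∀ k, m ≤ k → k < n → ∀ x, ‖v (k + 1) x - v k x‖ ≤ a (k + 1)) (x y : α) :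
    ‖v n x - v n y‖ ≤ ‖v m x - v m y‖ + 2 * ∑ k ∈ Icc (m + 1) n, a k := by
  have drift : ∀ z, ‖v n z - v m z‖ ≤ ∑ k ∈ Icc (m + 1) n, a k := fun z => by
    rw [← dist_eq_norm, dist_comm]
    refine dist_le_sum_Icc_of_dist_succ_le (v · z) a hmn fun k hmk hkn => ?_
    rw [dist_comm, dist_eq_norm]
    exact hstep k hmk hkn z
  calc ‖v n x - v n y‖ = ‖(v n x - v m x) + (v m x - v m y) - (v n y - v m y)‖ := by
        congr 1; abel
    _ ≤ ‖v n x - v m x‖ + ‖v m x - v m y‖ + ‖v n y - v m y‖ :=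
        (norm_sub_le _ _).trans (by gcongr; exact norm_add_le _ _)
    _ ≤ ‖v m x - v m y‖ + 2 * ∑ k ∈ Icc (m + 1) n, a k := by
        linarith [drift x, drift y]

/-- Upper bound on the difference of accumulated displacements at two points
(Theorem 1, upper-bound direction): with `v 0 = 0`,
`v (k+1) x = v k x + u (k+1) (x + v k x)` and `‖u k‖_∞ ≤ a k`, for any
`1 ≤ k'' ≤ K`:
`‖v K x − v K y‖ ≤ ‖v (k''−1) x − v (k''−1) y‖ + 2 ∑_{k=k''}^K a k`,
and in particular `‖v K x − v K y‖ ≤ 2 ∑_{k=1}^K a k`. -/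
theorem motion_difference_upper_bound (d K : ℕ)
    (u : ℕ → (Fin d → ℝ) → (Fin d → ℝ)) (a : ℕ → ℝ)
    (v : ℕ → (Fin d → ℝ) → (Fin d → ℝ))
    (hbound : ∀ k ∈ Finset.Icc 1 K, ∀ z : Fin d → ℝ, ‖u k z‖ ≤ a k)
    (hv0 : ∀ x, v 0 x = 0)
    (hvrec : ∀ k x, v (k + 1) x = v k x + u (k + 1) (x + v k x)) :
    (∀ k'' : ℕ, 1 ≤ k'' → k'' ≤ K → ∀ x y : Fin d → ℝ,
        ‖v K x - v K y‖ ≤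
          ‖v (k'' - 1) x - v (k'' - 1) y‖ + 2 * ∑ k ∈ Finset.Icc k'' K, a k) ∧
    (∀ x y : Fin d → ℝ, ‖v K x - v K y‖ ≤ 2 * ∑ k ∈ Finset.Icc 1 K, a k) := by
  have hstep : ∀ k, k < K → ∀ x, ‖v (k + 1) x - v k x‖ ≤ a (k + 1) := fun k hk x => by
    rw [hvrec, add_sub_cancel_left]
    exact hbound (k + 1) (mem_Icc.2 ⟨by omega, hk⟩) _
  have drift_bound : ∀ m ≤ K, ∀ x y, ‖v K x - v K y‖ ≤
      ‖v m x - v m y‖ + 2 * ∑ k ∈ Icc (m + 1) K, a k := fun m hm =>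
    norm_sub_le_norm_sub_add_two_mul_sum v a hm fun k _ hk => hstep k hk
  refine ⟨fun k'' h1 hK x y => ?_, fun x y => ?_⟩
  · simpa only [Nat.sub_add_cancel h1] using drift_bound (k'' - 1) (by omega) x y
  · simpa [hv0] using drift_bound 0 K.zero_le x y
end

section
/- Fix integers K ≥ 1, block sizes p_1 > p_2 > … > p_K ≥ 1, and reals a_1, …, a_K ≥ 0. Suppose x, y ∈ ℤ satisfy |x − y| ≥ p_1 + 2 Σ_{k=2}^{K} a_k. Then there exist displacement fields u_1, …, u_K : ℝ → ℝ such that: each u_k restricted to ℤ is p_k-block-constant (u_k(z) depends only on ⌊z/p_k⌋ for the nearest-neighbor extension to ℝ), ‖u_k‖_∞ ≤ a_k, and the recursively composed total displacement v_K (with v_0 = 0, v_k(z) = v_{k-1}(z) + u_k(z + v_{k-1}(z))) satisfies |v_K(x) − v_K(y)| ≥ 2 Σ_{k=1}^{K} a_k. -/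
/-!
Work with `x < y` and write `S k = a 1 + ⋯ + a k`. At level `k + 1` push the block of
`y + S k` and everything to its right by `+a (k + 1)`, everything to its left by `-a (k + 1)`.
By induction the images of `x` and `y` after `k` levels are `x - S k` and `y + S k`, so the two
points only drift apart; since `p (k + 1) ≤ p 1 ≤ y - x`, the current image of `x` stays in a block strictly left of that of
`y`, and every level adds `2 a (k + 1)` to the gap.
-/

open Finset

theorem floor_div_lt_floor_div_of_add_le {q A B : ℝ} (hq : 0 < q) (h : A + q ≤ B) :
    ⌊A / q⌋ < ⌊B / q⌋ := by
  have hdiv : A / q + 1 ≤ B / q := by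
    rw [← div_self hq.ne', ← add_div]
    gcongr
  rw [← Int.add_one_le_iff, ← Int.floor_add_one]
  exact Int.floor_le_floor hdiv

noncomputable def pushField (q : ℕ) (c b : ℝ) (z : ℝ) : ℝ :=
  if ⌊c / q⌋ ≤ ⌊z / q⌋ then b else -b

section pushField

variable {q : ℕ} {c b : ℝ}

theorem pushField_eq_of_floor_eq {z w : ℝ} (h : ⌊z / q⌋ = ⌊w / q⌋) :
    pushField q c b z = pushField q c b w := by
  simp only [pushField, h]

theorem abs_pushField_le (hb : 0 ≤ b) (z : ℝ) : |pushField q c b z| ≤ b := by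
  unfold pushField
  split_ifs <;> simp [abs_of_nonneg hb]

theorem pushField_self : pushField q c b c = b :=
  if_pos le_rfl

theorem pushField_of_add_le (hq : 0 < q) {z : ℝ} (h : z + q ≤ c) : pushField q c b z = -b :=
  if_neg (not_le.2 (floor_div_lt_floor_div_of_add_le (Nat.cast_pos.2 hq) h))

end pushField

def composeField (u : ℕ → ℝ → ℝ) : ℕ → ℝ → ℝ
  | 0 => fun _ => 0
  | k + 1 => fun z => composeField u k z + u (k + 1) (z + composeField u k z)

theorem composeField_push_apart {u : ℕ → ℝ → ℝ} {a : ℕ → ℝ} {x y : ℝ} {K : ℕ}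
    (hu : ∀ k < K, u (k + 1) (x - ∑ j ∈ Icc 1 k, a j) = -a (k + 1) ∧
      u (k + 1) (y + ∑ j ∈ Icc 1 k, a j) = a (k + 1)) :
    ∀ k ≤ K, composeField u k x = -∑ j ∈ Icc 1 k, a j ∧
      composeField u k y = ∑ j ∈ Icc 1 k, a j := by
  intro k hk
  induction k with
  | zero => simp [composeField]
  | succ k ih =>
    obtain ⟨hx, hy⟩ := ih (by omega)
    obtain ⟨hux, huy⟩ := hu k (by omega)
    rw [sum_Icc_succ_top (by omega : 1 ≤ k + 1)]
    constructor
    · change composeField u k x + u (k + 1) (x + composeField u k x) = _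
      rw [hx, ← sub_eq_add_neg, hux]
      ring
    · change composeField u k y + u (k + 1) (y + composeField u k y) = _
      rw [hy, huy]

theorem exists_blockConstant_push_apart (K : ℕ) (p : ℕ → ℕ) (a : ℕ → ℝ) (x y : ℝ)
    (hp : ∀ k ∈ Icc 1 K, 0 < p k ∧ (p k : ℝ) ≤ |x - y|) (ha : ∀ k ∈ Icc 1 K, 0 ≤ a k) :
    ∃ u : ℕ → ℝ → ℝ,
      (∀ k ∈ Icc 1 K,
        (∀ z w : ℝ, ⌊z / (p k : ℝ)⌋ = ⌊w / (p k : ℝ)⌋ → u k z = u k w) ∧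
        (∀ z : ℝ, |u k z| ≤ a k)) ∧
      2 * ∑ k ∈ Icc 1 K, a k ≤ |composeField u K x - composeField u K y| := by
  wlog hxy : x ≤ y generalizing x y
  · obtain ⟨u, hu, hgap⟩ := this y x (by simpa only [abs_sub_comm] using hp) (by linarith)
    exact ⟨u, hu, by rwa [abs_sub_comm]⟩
  set S : ℕ → ℝ := fun k => ∑ j ∈ Icc 1 k, a j
  have hS : ∀ k ≤ K, 0 ≤ S k := fun k hk =>
    sum_nonneg fun j hj => ha j (Icc_subset_Icc_right hk hj)
  refine ⟨fun k => pushField (p k) (y + S (k - 1)) (a k),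
    fun k hk => ⟨fun z w => pushField_eq_of_floor_eq, abs_pushField_le (ha k hk)⟩, ?_⟩
  obtain ⟨hx, hy⟩ := composeField_push_apart (K := K) (x := x) (y := y)
    (u := fun k => pushField (p k) (y + S (k - 1)) (a k)) (fun k hk => by
      have hk' : k + 1 ∈ Icc 1 K := mem_Icc.2 ⟨by omega, hk⟩
      obtain ⟨hpos, hle⟩ := hp (k + 1) hk'
      rw [abs_sub_comm, abs_of_nonneg (sub_nonneg.2 hxy)] at hle
      have hSk := hS k hk.le
      simp only [Nat.add_sub_cancel]
      exact ⟨pushField_of_add_le hpos (by linarith), pushField_self⟩) K le_rfl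
  rw [hx, hy, ← neg_add', abs_neg, ← two_mul, abs_of_nonneg (by linarith [hS K le_rfl])]

theorem regional_dependency_achievability_general
    (K : ℕ) (p : ℕ → ℕ) (a : ℕ → ℝ)
    (hp_dec : ∀ k, 1 ≤ k → k < K → p (k + 1) < p k)
    (hpK : 1 ≤ p K)
    (ha : ∀ k ∈ Finset.Icc 1 K, 0 ≤ a k)
    (x y : ℤ)
    (hxy : (p 1 : ℝ) + 2 * ∑ k ∈ Finset.Icc 2 K, a k ≤ |((x : ℝ) - y)|) :
    ∃ u v : ℕ → ℝ → ℝ,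
      (∀ k ∈ Finset.Icc 1 K,
        (∀ z w : ℝ, ⌊z / (p k : ℝ)⌋ = ⌊w / (p k : ℝ)⌋ → u k z = u k w) ∧
        (∀ z : ℝ, |u k z| ≤ a k)) ∧
      (∀ z : ℝ, v 0 z = 0) ∧
      (∀ k z, v (k + 1) z = v k z + u (k + 1) (z + v k z)) ∧
      2 * ∑ k ∈ Finset.Icc 1 K, a k ≤ |v K (x : ℝ) - v K (y : ℝ)| := by
  have hanti : AntitoneOn p (Set.Icc 1 K) :=
    antitoneOn_of_add_one_le Set.ordConnected_Icc fun k _ hk hk1 =>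
      (hp_dec k hk.1 (Nat.lt_of_succ_le hk1.2)).le
  have htail : 0 ≤ ∑ k ∈ Icc 2 K, a k :=
    sum_nonneg fun k hk => ha k (Icc_subset_Icc_left (by norm_num) hk)
  have hp : ∀ k ∈ Icc 1 K, 0 < p k ∧ (p k : ℝ) ≤ |(x : ℝ) - y| := by
    intro k hk
    have hk' := mem_Icc.1 hk
    have hK : K ∈ Set.Icc 1 K := ⟨hk'.1.trans hk'.2, le_rfl⟩
    have h1 : 1 ∈ Set.Icc 1 K := ⟨le_rfl, hK.1⟩
    have hle1 : (p k : ℝ) ≤ p 1 := by exact_mod_cast hanti h1 hk' hk'.1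
    have hpk : p K ≤ p k := hanti hk' hK hk'.2
    exact ⟨by omega, by linarith⟩
  obtain ⟨u, hu, hgap⟩ := exists_blockConstant_push_apart K p a x y hp ha
  exact ⟨u, composeField u, hu, fun _ => rfl, fun _ _ => rfl, hgap⟩

/-- Achievability part of the Regional Dependency theorem (1D):
if `|x − y| ≥ p 1 + 2 ∑_{k=2}^K a k`, there exist residual fields
`u k : ℝ → ℝ`, each `p k`-block-constant (via nearest-neighbor extension,
i.e. depending only on `⌊z / p k⌋`) and bounded by `a k`, whose recursive
composition `v` (`v 0 = 0`, `v (k+1) z = v k z + u (k+1) (z + v k z)`)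
satisfies `|v K x − v K y| ≥ 2 ∑_{k=1}^K a k`. -/
theorem regional_dependency_achievability
    (K : ℕ) (hK : 1 ≤ K) (p : ℕ → ℕ) (a : ℕ → ℝ)
    (hp_dec : ∀ k, 1 ≤ k → k < K → p (k + 1) < p k)
    (hpK : 1 ≤ p K)
    (ha : ∀ k ∈ Finset.Icc 1 K, 0 ≤ a k)
    (x y : ℤ)
    (hxy : (p 1 : ℝ) + 2 * ∑ k ∈ Finset.Icc 2 K, a k ≤ |((x : ℝ) - y)|) :
    ∃ u v : ℕ → ℝ → ℝ,
      (∀ k ∈ Finset.Icc 1 K,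
        (∀ z w : ℝ, ⌊z / (p k : ℝ)⌋ = ⌊w / (p k : ℝ)⌋ → u k z = u k w) ∧
        (∀ z : ℝ, |u k z| ≤ a k)) ∧
      (∀ z : ℝ, v 0 z = 0) ∧
      (∀ k z, v (k + 1) z = v k z + u (k + 1) (z + v k z)) ∧
      2 * ∑ k ∈ Finset.Icc 1 K, a k ≤ |v K (x : ℝ) - v K (y : ℝ)| :=
  regional_dependency_achievability_general K p a hp_dec hpK ha x y hxy
end

section
/- Let a_1, …, a_K ≥ 0 and let (p_k) and (p'_k) be two decreasing sequences of positive integers with p'_k ≤ p_k for every k. Let Δ and Δ' be the corresponding motion-separability functions (defined piecewise as in Eq. (9)). Then for every p at which both are defined, Δ'(p) ≥ Δ(p). -/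
/-!
Write `S k = ∑_{k' = k}^{K} a k'` and `T k = p k + 2 S (k + 1)`. Then `Δ(P) = 2 S k` exactly when
`P` lies in the `k`-th band `T k ≤ P < T (k - 1)`, with the conventions that there is no lower bound
for `k = K + 1` and no upper bound for `k = 1`. Since `a ≥ 0`, `S` decreases in `k`, so it suffices to
show that the band `j` of `P` for `p'` is not above its band `k` for `p`. Both `S` and `p` decrease,
hence so does `T`, and `T' ≤ T`; so `k < j` would give `T' (j - 1) ≤ T (j - 1) ≤ T k ≤ P < T' (j - 1)`.
-/

/-- `DeltaSpec K p a P v` states that `v` is the value assigned to the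
distance `P` by the piecewise motion-separability function Δ of Eq. (9),
with pool sizes `p k` and capture ranges `a k`. -/
def DeltaSpec (K : ℕ) (p : ℕ → ℕ) (a : ℕ → ℝ) (P v : ℝ) : Prop :=
  ((p 1 : ℝ) + 2 * ∑ k ∈ Finset.Icc 2 K, a k ≤ P ∧
      v = 2 * ∑ k ∈ Finset.Icc 1 K, a k) ∨
  (∃ k : ℕ, 1 < k ∧ k ≤ K ∧
      (p k : ℝ) + 2 * ∑ k' ∈ Finset.Icc (k + 1) K, a k' ≤ P ∧
      P < (p (k - 1) : ℝ) + 2 * ∑ k' ∈ Finset.Icc k K, a k' ∧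
      v = 2 * ∑ k' ∈ Finset.Icc k K, a k') ∨
  (P < (p K : ℝ) ∧ v = 0)

lemma antitoneOn_Icc_of_succ_lt {α : Type*} [Preorder α] {f : ℕ → α} {K : ℕ}
    (hf : ∀ k, 1 ≤ k → k < K → f (k + 1) < f k) : AntitoneOn f (Set.Icc 1 K) :=
  (strictAntiOn_of_succ_lt Set.ordConnected_Icc fun k _ hk hk' ↦ by
    simp only [Order.succ_eq_add_one, Set.mem_Icc] at hk hk' ⊢
    exact hf k hk.1 (by omega)).antitoneOn

namespace DeltaSpec

variable {K : ℕ} {p : ℕ → ℕ} {a : ℕ → ℝ}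

def tailSum (K : ℕ) (a : ℕ → ℝ) (k : ℕ) : ℝ := ∑ k' ∈ Finset.Icc k K, a k'

def threshold (K : ℕ) (p : ℕ → ℕ) (a : ℕ → ℝ) (k : ℕ) : ℝ := p k + 2 * tailSum K a (k + 1)

lemma tailSum_of_lt {k : ℕ} (hk : K < k) : tailSum K a k = 0 := by
  simp [tailSum, Finset.Icc_eq_empty_of_lt hk]

lemma tailSum_antitoneOn (ha : ∀ k ∈ Finset.Icc 1 K, 0 ≤ a k) :
    AntitoneOn (tailSum K a) (Set.Ici 1) := by
  intro i hi j _ hij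
  refine Finset.sum_le_sum_of_subset_of_nonneg (Finset.Icc_subset_Icc_left hij) ?_
  intro k hk _
  obtain ⟨hik, hkK⟩ := Finset.mem_Icc.1 hk
  exact ha k (Finset.mem_Icc.2 ⟨le_trans hi hik, hkK⟩)

lemma threshold_antitoneOn (hp : AntitoneOn p (Set.Icc 1 K))
    (ha : ∀ k ∈ Finset.Icc 1 K, 0 ≤ a k) : AntitoneOn (threshold K p a) (Set.Icc 1 K) := by
  intro i hi j hj hij
  have hpij : (p j : ℝ) ≤ p i := by exact_mod_cast hp hi hj hij
  have hS := tailSum_antitoneOn ha (Set.mem_Ici.2 (Nat.le_add_left 1 i))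
    (Set.mem_Ici.2 (Nat.le_add_left 1 j)) (Nat.add_le_add_right hij 1)
  unfold threshold
  linarith

lemma threshold_le_of_le {p' : ℕ → ℕ} {k : ℕ} (hle : p' k ≤ p k) :
    threshold K p' a k ≤ threshold K p a k := by
  unfold threshold
  gcongr

lemma exists_band {P v : ℝ} (h : DeltaSpec K p a P v) :
    ∃ k, 1 ≤ k ∧ k ≤ K + 1 ∧ (k ≤ K → threshold K p a k ≤ P) ∧
      (1 < k → P < threshold K p a (k - 1)) ∧ v = 2 * tailSum K a k := by
  rcases h with ⟨hlo, hv⟩ | ⟨k, hk1, hkK, hlo, hhi, hv⟩ | ⟨hhi, hv⟩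
  · exact ⟨1, le_rfl, by omega, fun _ ↦ hlo, fun h ↦ absurd h (lt_irrefl 1), hv⟩
  · refine ⟨k, hk1.le, by omega, fun _ ↦ hlo, fun _ ↦ ?_, hv⟩
    rwa [threshold, Nat.sub_add_cancel hk1.le]
  · refine ⟨K + 1, by omega, le_rfl, fun h ↦ absurd h (by omega), fun _ ↦ ?_, ?_⟩
    · simpa [threshold, tailSum_of_lt (Nat.lt_succ_self K)] using hhi
    · simp [hv, tailSum_of_lt (Nat.lt_succ_self K)]

end DeltaSpec

lemma band_le_of_threshold_le {K : ℕ} {T T' : ℕ → ℝ} (hT : AntitoneOn T (Set.Icc 1 K))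
    (hT' : ∀ m ∈ Set.Icc 1 K, T' m ≤ T m) {P : ℝ} {k j : ℕ} (hk : 1 ≤ k) (hj : j ≤ K + 1)
    (hkP : k ≤ K → T k ≤ P) (hPj : 1 < j → P < T' (j - 1)) : j ≤ k := by
  by_contra! hkj
  have hj1 : j - 1 ∈ Set.Icc 1 K := ⟨by omega, by omega⟩
  have := calc
    T' (j - 1) ≤ T (j - 1) := hT' _ hj1
    _ ≤ T k := hT ⟨hk, by omega⟩ hj1 (by omega)
    _ ≤ P := hkP (by omega)
  linarith [hPj (by omega)]

theorem delta_increases_with_smaller_pools_general (K : ℕ)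
    (p p' : ℕ → ℕ) (a : ℕ → ℝ)
    (hp_dec : ∀ k, 1 ≤ k → k < K → p (k + 1) < p k)
    (hle : ∀ k ∈ Finset.Icc 1 K, p' k ≤ p k)
    (ha : ∀ k ∈ Finset.Icc 1 K, 0 ≤ a k)
    (P v v' : ℝ)
    (hv : DeltaSpec K p a P v) (hv' : DeltaSpec K p' a P v') :
    v ≤ v' := by
  obtain ⟨k, hk1, -, hkP, -, rfl⟩ := hv.exists_band
  obtain ⟨j, hj1, hjK, -, hPj, rfl⟩ := hv'.exists_band
  have hjk : j ≤ k :=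
    band_le_of_threshold_le
      (DeltaSpec.threshold_antitoneOn (antitoneOn_Icc_of_succ_lt hp_dec) ha)
      (fun m hm ↦ DeltaSpec.threshold_le_of_le (hle m (Finset.mem_Icc.2 hm))) hk1 hjK hkP hPj
  linarith [DeltaSpec.tailSum_antitoneOn ha (Set.mem_Ici.2 hj1) (Set.mem_Ici.2 hk1) hjk]

/-- Reducing the pool sizes pointwise (`p' k ≤ p k`) while keeping the
capture ranges `a k` fixed pointwise increases the motion-separability
function: `Δ'(P) ≥ Δ(P)` wherever both are defined. -/
theorem delta_increases_with_smaller_pools (K : ℕ) (hK : 1 ≤ K)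
    (p p' : ℕ → ℕ) (a : ℕ → ℝ)
    (hp_dec : ∀ k, 1 ≤ k → k < K → p (k + 1) < p k)
    (hp'_dec : ∀ k, 1 ≤ k → k < K → p' (k + 1) < p' k)
    (hpK : 1 ≤ p K) (hp'K : 1 ≤ p' K)
    (hle : ∀ k ∈ Finset.Icc 1 K, p' k ≤ p k)
    (ha : ∀ k ∈ Finset.Icc 1 K, 0 ≤ a k)
    (P v v' : ℝ)
    (hv : DeltaSpec K p a P v) (hv' : DeltaSpec K p' a P v') :
    v ≤ v' :=
  delta_increases_with_smaller_pools_general K p p' a hp_dec hle ha P v v' hv hv'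
end

section
/- Let a_1, …, a_K ≥ 0 and p_1 > … > p_K ≥ 1 be as in the coarse-to-fine setting, and fix 1 ≤ k'' ≤ K. Suppose u_{k''}, …, u_K : ℝ → ℝ satisfy ‖u_k‖_∞ ≤ a_k, and define v by v_{k''−1} = 0 and v_k(z) = v_{k−1}(z) + u_k(z + v_{k−1}(z)). Then for all x, y ∈ ℤ, |v_K(x) − v_K(y)| ≤ 2 Σ_{k=k''}^{K} a_k, and this bound is tight: there exist admissible fields (each u_k being p_k-block-constant) and points x, y with |x − y| ≥ p_{k''} + 2Σ_{k=k''+1}^K a_k achieving |v_K(x) − v_K(y)| = 2 Σ_{k=k''}^{K} a_k. -/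
/-!
Each motion `v K z` is a sum of residual values `u k (·)` with `|u k| ≤ a k`, so
`|v K z| ≤ ∑ a k` and two motions differ by at most twice that.

For tightness let every field push away from `0`: `u k = -a k` on the negative half-line and `a k`
on the nonnegative one. It is `p`-block-constant because `⌊z / p⌋ < 0 ↔ z < 0`, and an outward
displacement never carries a point across `0`, so the composed motion is again outward, with the
partial sums of the `a k` as amplitude. Comparing `0` with a far negative integer gives `2 ∑ a k`.
-/

open Finset

theorem apply_le_apply_of_succ_le {α : Type*} [Preorder α] {p : ℕ → α} {m K : ℕ}
    (hp : ∀ k, m ≤ k → k < K → p (k + 1) ≤ p k)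
    {k : ℕ} (hmk : m ≤ k) (hkK : k ≤ K) :
    p K ≤ p k := by
  induction K, hkK using Nat.le_induction with
  | base => exact le_rfl
  | succ K hkK ih =>
    exact (hp K (hmk.trans hkK) K.lt_succ_self).trans (ih fun i hi hiK => hp i hi (by omega))

theorem norm_le_sum_Icc_of_residual_recursion {E : Type*} [SeminormedAddCommGroup E]
    {u v : ℕ → E → E} {a : ℕ → ℝ} {m K : ℕ}
    (hu : ∀ k ∈ Icc (m + 1) K, ∀ z, ‖u k z‖ ≤ a k) (hv₀ : ∀ z, v m z = 0)
    (hv : ∀ k, m ≤ k → k < K → ∀ z, v (k + 1) z = v k z + u (k + 1) (z + v k z))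
    {n : ℕ} (hmn : m ≤ n) (hnK : n ≤ K) (z : E) :
    ‖v n z‖ ≤ ∑ k ∈ Icc (m + 1) n, a k := by
  induction n, hmn using Nat.le_induction with
  | base => simp [hv₀]
  | succ n hmn ih =>
    rw [hv n hmn hnK z, sum_Icc_succ_top (by omega)]
    exact norm_add_le_of_le (ih (Nat.le_of_succ_le hnK)) (hu _ (mem_Icc.2 ⟨by omega, hnK⟩) _)

theorem Int.floor_div_neg_iff {α : Type*} [Field α] [LinearOrder α] [IsStrictOrderedRing α]
    [FloorRing α] {p z : α} (hp : 0 < p) : ⌊z / p⌋ < 0 ↔ z < 0 := by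
  rw [Int.floor_lt, Int.cast_zero, div_lt_iff₀ hp, zero_mul]

section OutwardField

noncomputable def outwardField (c z : ℝ) : ℝ := if z < 0 then -c else c

variable {c z : ℝ}

@[simp]
theorem outwardField_zero_left : outwardField 0 z = 0 := by
  simp [outwardField]

theorem abs_outwardField (hc : 0 ≤ c) : |outwardField c z| = c := by
  unfold outwardField
  split_ifs <;> simp [abs_of_nonneg hc]

theorem outwardField_add (hc : 0 ≤ c) (d : ℝ) :
    outwardField (c + d) z = outwardField c z + outwardField d (z + outwardField c z) := by
  unfold outwardField
  by_cases hz : z < 0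
  · simp only [if_pos hz, if_pos (by linarith : z + -c < 0)]
    ring
  · simp only [if_neg hz, if_neg (by linarith : ¬z + c < 0)]

theorem outwardField_eq_of_floor_div_eq {p w : ℝ} (hp : 0 < p) (h : ⌊z / p⌋ = ⌊w / p⌋) :
    outwardField c z = outwardField c w := by
  simp only [outwardField, ← Int.floor_div_neg_iff hp, h]

theorem abs_outwardField_sub_outwardField (hc : 0 ≤ c) {x y : ℝ} (hx : 0 ≤ x) (hy : y < 0) :
    |outwardField c x - outwardField c y| = 2 * c := by
  rw [outwardField, outwardField, if_neg hx.not_gt, if_pos hy, sub_neg_eq_add, ← two_mul,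
    abs_of_nonneg (by positivity)]

end OutwardField

/-- Regional Dependency theorem restricted to levels `k''` through `K`:
(upper bound) any composition of residual fields `u k` bounded by `a k`
starting from the identity at level `k''−1` satisfies
`|v K x − v K y| ≤ 2 ∑_{k=k''}^K a k` for all points; and (tightness) there
exist admissible fields — each `u k` being `p k`-block-constant on the
nearest-neighbor extension — and points `x, y` with
`|x − y| ≥ p k'' + 2 ∑_{k=k''+1}^K a k` achieving
`|v K x − v K y| = 2 ∑_{k=k''}^K a k`. -/
theorem regional_dependency_partial (K k'' : ℕ) (hk1 : 1 ≤ k'') (hkK : k'' ≤ K)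
    (p : ℕ → ℕ) (a : ℕ → ℝ)
    (hp_dec : ∀ k, 1 ≤ k → k < K → p (k + 1) < p k)
    (hpK : 1 ≤ p K)
    (ha : ∀ k ∈ Finset.Icc 1 K, 0 ≤ a k) :
    (∀ u v : ℕ → ℝ → ℝ,
      (∀ k ∈ Finset.Icc k'' K, ∀ z : ℝ, |u k z| ≤ a k) →
      (∀ z : ℝ, v (k'' - 1) z = 0) →
      (∀ k, k'' - 1 ≤ k → k < K →
        ∀ z : ℝ, v (k + 1) z = v k z + u (k + 1) (z + v k z)) →
      ∀ x y : ℤ,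
        |v K (x : ℝ) - v K (y : ℝ)| ≤ 2 * ∑ k ∈ Finset.Icc k'' K, a k) ∧
    (∃ u v : ℕ → ℝ → ℝ, ∃ x y : ℤ,
      (∀ k ∈ Finset.Icc k'' K,
        (∀ z w : ℝ, ⌊z / (p k : ℝ)⌋ = ⌊w / (p k : ℝ)⌋ → u k z = u k w) ∧
        (∀ z : ℝ, |u k z| ≤ a k)) ∧
      (∀ z : ℝ, v (k'' - 1) z = 0) ∧
      (∀ k, k'' - 1 ≤ k → k < K →
        ∀ z : ℝ, v (k + 1) z = v k z + u (k + 1) (z + v k z)) ∧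
      (p k'' : ℝ) + 2 * ∑ k ∈ Finset.Icc (k'' + 1) K, a k ≤ |((x : ℝ) - y)| ∧
      |v K (x : ℝ) - v K (y : ℝ)| = 2 * ∑ k ∈ Finset.Icc k'' K, a k) := by
  obtain ⟨m, rfl⟩ := Nat.exists_eq_add_of_le' hk1
  simp only [Nat.add_sub_cancel]
  have ha' : ∀ k ∈ Icc (m + 1) K, 0 ≤ a k := fun k hk => ha k (by grind)
  have hS : ∀ k ≤ K, 0 ≤ ∑ j ∈ Icc (m + 1) k, a j := fun k hk =>
    sum_nonneg fun j hj => ha' j (by grind)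
  have hp_pos : ∀ k ∈ Icc (m + 1) K, (0 : ℝ) < p k := fun k hk => by
    have := apply_le_apply_of_succ_le (fun j hj hjK => (hp_dec j (by omega) hjK).le)
      (mem_Icc.1 hk).1 (mem_Icc.1 hk).2
    exact Nat.cast_pos.2 (by omega)
  refine ⟨fun u v hu hv₀ hv x y => ?_, ?_⟩
  · have h := norm_le_sum_Icc_of_residual_recursion (E := ℝ) (by simpa only [Real.norm_eq_abs])
      hv₀ hv (by omega) le_rfl
    simpa only [two_mul, Real.norm_eq_abs] using norm_sub_le_of_le (h x) (h y)
  · obtain ⟨y, hy⟩ :=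
      exists_int_lt (min (-((p (m + 1) : ℝ) + 2 * ∑ k ∈ Icc (m + 2) K, a k)) 0)
    obtain ⟨hy_far, hy_neg⟩ := lt_min_iff.1 hy
    refine ⟨fun k => outwardField (a k), fun k => outwardField (∑ j ∈ Icc (m + 1) k, a j),
      0, y,
      fun k hk => ⟨fun z w => outwardField_eq_of_floor_div_eq (hp_pos k hk),
        fun z => (abs_outwardField (ha' k hk)).le⟩,
      fun z => by simp, fun k hmk hkK z => ?_, ?_, ?_⟩
    · dsimp only
      rw [sum_Icc_succ_top (by omega), outwardField_add (hS k hkK.le)]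
    · rw [Int.cast_zero, zero_sub, abs_neg, abs_of_neg hy_neg]
      linarith
    · exact abs_outwardField_sub_outwardField (hS K le_rfl) (by simp) hy_neg
end
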